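/- arXiv:2006.03100 — 3 statements merged into one kernel-verified Lean document; each statement's English description precedes it below -/
import Mathlib

section
/- Let n ≥ 2, a ≥ 0, and let φ : ℝ → ℝ be a differentiable function with φ(t) > a for all t, satisfying F(φ(t))·e^{φ(t)} = e^{nt}/n + F(a)e^a for all t, where F(s) = Σ_{k=0}^{n-1} (-1)^{n-k-1} (n-1)!/k! s^k, and satisfying φ^{n-1}φ' e^{φ} = e^{nt}. Then 0 < φ'(t) < n for all t. -/
/-!
Write `P n` for the polynomial `F` of the statement. It satisfies `(P n(s) eˢ)' = sⁿ⁻¹ eˢ` and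
`P (m+1) = sᵐ - m P m`, so `sⁿ⁻¹ eˢ - P n(s) eˢ = (n-1) P (n-1)(s) eˢ` is strictly increasing on
`[0, ∞)`. Evaluated between `a` and `φ(t)` this gives `e^{nt}/n < φ(t)ⁿ⁻¹ e^{φ(t)}`, and the ODE
then yields `0 < φ'(t) < n`.
-/

open Real Set Finset

noncomputable def powExpAntideriv (n : ℕ) (s : ℝ) : ℝ :=
  ∑ k ∈ range n, (-1 : ℝ) ^ (n - k - 1) * ((n - 1).factorial : ℝ) / (k.factorial : ℝ) * s ^ k

lemma powExpAntideriv_one (s : ℝ) : powExpAntideriv 1 s = 1 := by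
  simp [powExpAntideriv]

lemma powExpAntideriv_add_two (m : ℕ) (s : ℝ) :
    powExpAntideriv (m + 2) s = s ^ (m + 1) - (m + 1) * powExpAntideriv (m + 1) s := by
  have hcoeff : ∀ k ∈ range (m + 1),
      (-1 : ℝ) ^ (m + 2 - k - 1) * ((m + 2 - 1).factorial : ℝ) / (k.factorial : ℝ) * s ^ k =
        -((m + 1) * ((-1 : ℝ) ^ (m + 1 - k - 1) * ((m + 1 - 1).factorial : ℝ) /
          (k.factorial : ℝ) * s ^ k)) := by
    intro k hk
    have hexp : m + 2 - k - 1 = (m + 1 - k - 1) + 1 := by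
      have := mem_range.mp hk
      omega
    rw [hexp, pow_succ, show m + 2 - 1 = m + 1 from rfl, Nat.factorial_succ]
    push_cast
    ring
  have hlast : (-1 : ℝ) ^ (m + 2 - (m + 1) - 1) * ((m + 2 - 1).factorial : ℝ) /
      ((m + 1).factorial : ℝ) * s ^ (m + 1) = s ^ (m + 1) := by
    rw [show m + 2 - (m + 1) - 1 = 0 by omega, show m + 2 - 1 = m + 1 from rfl, pow_zero, one_mul,
      div_self (by positivity), one_mul]
  rw [powExpAntideriv, sum_range_succ, sum_congr rfl hcoeff, hlast, sum_neg_distrib, ← mul_sum,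
    powExpAntideriv]
  ring

lemma hasDerivAt_powExpAntideriv_mul_exp {n : ℕ} (hn : 0 < n) (s : ℝ) :
    HasDerivAt (fun x => powExpAntideriv n x * exp x) (s ^ (n - 1) * exp s) s := by
  induction n, hn using Nat.le_induction generalizing s with
  | base => simpa [powExpAntideriv_one] using hasDerivAt_exp s
  | succ m hm ih =>
    obtain ⟨m, rfl⟩ : ∃ k, m = k + 1 := ⟨m - 1, by omega⟩
    simp only [powExpAntideriv_add_two, sub_mul, mul_assoc]
    refine (((hasDerivAt_pow (m + 1) s).fun_mul (hasDerivAt_exp s)).fun_sub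
      ((ih s).const_mul ((m : ℝ) + 1))).congr_deriv ?_
    simp only [Nat.add_sub_cancel, Nat.cast_add, Nat.cast_one]
    ring

lemma strictMonoOn_powExpAntideriv_mul_exp {n : ℕ} (hn : 0 < n) :
    StrictMonoOn (fun x => powExpAntideriv n x * exp x) (Ici 0) := by
  refine strictMonoOn_of_deriv_pos (convex_Ici 0)
    (fun x _ => (hasDerivAt_powExpAntideriv_mul_exp hn x).continuousAt.continuousWithinAt) ?_
  intro x hx
  rw [interior_Ici] at hx
  rw [(hasDerivAt_powExpAntideriv_mul_exp hn x).deriv]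
  exact mul_pos (pow_pos hx _) (exp_pos x)

lemma powExpAntideriv_mul_exp_sub_lt {n : ℕ} (hn : 2 ≤ n) {s₀ s : ℝ} (hs₀ : 0 ≤ s₀)
    (hs : s₀ < s) :
    powExpAntideriv n s * exp s - powExpAntideriv n s₀ * exp s₀ < s ^ (n - 1) * exp s := by
  obtain ⟨m, rfl⟩ : ∃ m, n = m + 2 := ⟨n - 2, by omega⟩
  have hmono : powExpAntideriv (m + 1) s₀ * exp s₀ < powExpAntideriv (m + 1) s * exp s :=
    strictMonoOn_powExpAntideriv_mul_exp (by omega : 0 < m + 1) (mem_Ici.mpr hs₀)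
    (mem_Ici.mpr (hs₀.trans hs.le)) hs
  have hgap : 0 < ((m : ℝ) + 1) *
      (powExpAntideriv (m + 1) s * exp s - powExpAntideriv (m + 1) s₀ * exp s₀) :=
    mul_pos (by positivity) (sub_pos.mpr hmono)
  have hs₀_pow : 0 ≤ s₀ ^ (m + 1) * exp s₀ := by positivity
  rw [powExpAntideriv_add_two, powExpAntideriv_add_two, show m + 2 - 1 = m + 1 from rfl]
  linarith

theorem statement3_general (n : ℕ) (hn : 2 ≤ n) (a : ℝ) (ha : 0 ≤ a) (F : ℝ → ℝ)
    (hF : ∀ s : ℝ, F s =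
      ∑ k ∈ Finset.range n,
        (-1 : ℝ) ^ (n - k - 1) * (Nat.factorial (n - 1) : ℝ) / (Nat.factorial k : ℝ) * s ^ k)
    (φ : ℝ → ℝ) (hφa : ∀ t, a < φ t)
    (himpl : ∀ t : ℝ, F (φ t) * Real.exp (φ t) = Real.exp (n * t) / n + F a * Real.exp a)
    (hode : ∀ t : ℝ, (φ t) ^ (n - 1) * deriv φ t * Real.exp (φ t) = Real.exp (n * t)) :
    ∀ t : ℝ, 0 < deriv φ t ∧ deriv φ t < n := by
  obtain rfl : F = powExpAntideriv n := funext hF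
  intro t
  have hn₀ : (0 : ℝ) < n := by positivity
  have hA : 0 < φ t ^ (n - 1) * exp (φ t) := by
    have := ha.trans_lt (hφa t)
    positivity
  have hbound : exp (n * t) / n < φ t ^ (n - 1) * exp (φ t) := by
    have := powExpAntideriv_mul_exp_sub_lt hn ha (hφa t)
    linarith [himpl t]
  have hderiv : deriv φ t = exp (n * t) / (φ t ^ (n - 1) * exp (φ t)) := by
    rw [eq_div_iff hA.ne', ← hode t]
    ring
  rw [hderiv]
  refine ⟨div_pos (exp_pos _) hA, ?_⟩
  rw [div_lt_iff₀ hA]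
  rw [div_lt_iff₀ hn₀] at hbound
  linarith

/-- Let `n ≥ 2`, `a ≥ 0`, and let `φ : ℝ → ℝ` be a differentiable function with `φ(t) > a`
for all `t`, satisfying `F(φ(t)) e^{φ(t)} = e^{nt}/n + F(a)e^a` for all `t`, where
`F(s) = ∑_{k=0}^{n-1} (-1)^{n-k-1} (n-1)!/k! s^k`, and satisfying
`φ^{n-1} φ' e^{φ} = e^{nt}`. Then `0 < φ'(t) < n` for all `t`. -/
theorem statement3 (n : ℕ) (hn : 2 ≤ n) (a : ℝ) (ha : 0 ≤ a) (F : ℝ → ℝ)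
    (hF : ∀ s : ℝ, F s =
      ∑ k ∈ Finset.range n,
        (-1 : ℝ) ^ (n - k - 1) * (Nat.factorial (n - 1) : ℝ) / (Nat.factorial k : ℝ) * s ^ k)
    (φ : ℝ → ℝ) (hφ : Differentiable ℝ φ) (hφa : ∀ t, a < φ t)
    (himpl : ∀ t : ℝ, F (φ t) * Real.exp (φ t) = Real.exp (n * t) / n + F a * Real.exp a)
    (hode : ∀ t : ℝ, (φ t) ^ (n - 1) * deriv φ t * Real.exp (φ t) = Real.exp (n * t)) :
    ∀ t : ℝ, 0 < deriv φ t ∧ deriv φ t < n :=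
  statement3_general n hn a ha F hF φ hφa himpl hode
end

section
/- Define c_k(f) = ∫₀¹ s^k e^{sf} ds. For every fixed k ≥ 1, (c_{k-1}(f) - c_k(f))·f²·e^{-f} → 1 as f → +∞; equivalently, ∫₀¹ s^{k-1}(1-s) e^{sf} ds is asymptotically equivalent to e^f/f². -/
open Real Filter intervalIntegral

noncomputable def LL (m : ℕ) (f : ℝ) : ℝ := ∫ s in (0:ℝ)..1, s ^ m * Real.exp (s * f)

lemma LL_cont_integrand (m : ℕ) (f : ℝ) :
    IntervalIntegrable (fun s : ℝ => s ^ m * Real.exp (s * f)) MeasureTheory.volume 0 1 :=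
  (Continuous.mul (continuous_pow m) ((continuous_id.mul continuous_const).rexp)).intervalIntegrable 0 1

lemma fund (f : ℝ) : ∫ s in (0:ℝ)..1, Real.exp (s * f) * f = Real.exp f - 1 := by
  have h : ∀ s ∈ Set.uIcc (0:ℝ) 1, HasDerivAt (fun x : ℝ => Real.exp (x * f)) (Real.exp (s * f) * f) s := by
    intro s _
    exact ((hasDerivAt_mul_const f).exp)
  have := intervalIntegral.integral_eq_sub_of_hasDerivAt h
    (((continuous_id.mul continuous_const).rexp.mul continuous_const).intervalIntegrable 0 1)
  simpa using this

lemma LL_rec (m : ℕ) (f : ℝ) : f * LL (m + 1) f = Real.exp f - (m + 1) * LL m f := by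
  have hu : ∀ s ∈ Set.uIcc (0:ℝ) 1, HasDerivAt (fun x : ℝ => x ^ (m+1)) (((m:ℝ)+1) * s ^ m) s := by
    intro s _
    simpa using hasDerivAt_pow (m+1) s
  have hv : ∀ s ∈ Set.uIcc (0:ℝ) 1, HasDerivAt (fun x : ℝ => Real.exp (x * f)) (Real.exp (s * f) * f) s := by
    intro s _; exact (hasDerivAt_mul_const f).exp
  have hu' : IntervalIntegrable (fun s : ℝ => ((m:ℝ)+1) * s ^ m) MeasureTheory.volume 0 1 :=
    (continuous_const.mul (continuous_pow m)).intervalIntegrable 0 1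
  have hv' : IntervalIntegrable (fun s : ℝ => Real.exp (s * f) * f) MeasureTheory.volume 0 1 :=
    ((continuous_id.mul continuous_const).rexp.mul continuous_const).intervalIntegrable 0 1
  have := intervalIntegral.integral_mul_deriv_eq_deriv_mul hu hv hu' hv'
  -- this : ∫ s, s^(m+1) * (exp (s*f) * f) = 1^(m+1)*exp f - 0 - ∫ s, ((m+1)*s^m) * exp (s*f)
  have h1 : (∫ s in (0:ℝ)..1, s ^ (m+1) * (Real.exp (s * f) * f)) = f * LL (m+1) f := by
    rw [LL, ← intervalIntegral.integral_const_mul]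
    congr 1; ext s; ring
  have h2 : (∫ s in (0:ℝ)..1, ((m:ℝ)+1) * s ^ m * Real.exp (s * f)) = ((m:ℝ)+1) * LL m f := by
    rw [LL, ← intervalIntegral.integral_const_mul]
    congr 1; ext s; ring
  rw [h1] at this
  simp only [one_pow, one_mul, zero_pow, Nat.succ_ne_zero, zero_mul, mul_zero, sub_zero] at this
  rw [this]
  rw [h2]
  push_cast
  ring

lemma LL_zero (f : ℝ) : f * LL 0 f = Real.exp f - 1 := by
  have h := fund f
  rw [LL]
  simp only [pow_zero, one_mul]
  rw [← h, ← intervalIntegral.integral_const_mul]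
  congr 1; ext s; ring

lemma LL_nonneg (m : ℕ) (f : ℝ) : 0 ≤ LL m f := by
  apply intervalIntegral.integral_nonneg (by norm_num)
  intro s hs
  exact mul_nonneg (pow_nonneg hs.1 m) (Real.exp_pos _).le

lemma LL_le (m : ℕ) (f : ℝ) : LL m f ≤ LL 0 f := by
  apply intervalIntegral.integral_mono_on (by norm_num) (LL_cont_integrand m f) (LL_cont_integrand 0 f)
  intro s hs
  simp only [pow_zero, one_mul]
  have : s ^ m ≤ 1 := pow_le_one₀ hs.1 hs.2
  nlinarith [Real.exp_pos (s * f)]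

lemma exp_neg_LL (m : ℕ) : Tendsto (fun f : ℝ => Real.exp (-f) * LL m f) atTop (nhds 0) := by
  have h1 : ∀ᶠ f : ℝ in atTop, Real.exp (-f) * LL m f ≤ 1 / f := by
    filter_upwards [eventually_gt_atTop (0:ℝ)] with f hf
    have hL : LL m f ≤ (Real.exp f - 1) / f := by
      have h0 : LL 0 f = (Real.exp f - 1) / f := by
        field_simp; linarith [LL_zero f]
      rw [← h0]; exact LL_le m f
    have hexp : (0:ℝ) < Real.exp (-f) := Real.exp_pos _
    calc Real.exp (-f) * LL m f ≤ Real.exp (-f) * ((Real.exp f - 1) / f) :=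
          mul_le_mul_of_nonneg_left hL hexp.le
      _ = (1 - Real.exp (-f)) / f := by
          rw [Real.exp_neg]
          field_simp
      _ ≤ 1 / f := by
          gcongr
          linarith
  have h2 : ∀ᶠ f : ℝ in atTop, 0 ≤ Real.exp (-f) * LL m f := by
    filter_upwards with f
    exact mul_nonneg (Real.exp_pos _).le (LL_nonneg m f)
  have h3 : Tendsto (fun f : ℝ => 1 / f) atTop (nhds 0) := by
    simpa [one_div] using tendsto_inv_atTop_zero
  exact squeeze_zero' h2 h1 h3

lemma D_tendsto (m : ℕ) : Tendsto (fun f : ℝ => f * Real.exp (-f) * LL m f) atTop (nhds 1) := by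
  cases m with
  | zero =>
    have heq : ∀ᶠ f : ℝ in atTop, 1 - Real.exp (-f) = f * Real.exp (-f) * LL 0 f := by
      filter_upwards [eventually_gt_atTop (0:ℝ)] with f hf
      have h := LL_zero f
      rw [Real.exp_neg]
      field_simp
      nlinarith [Real.exp_pos f]
    have : Tendsto (fun f : ℝ => 1 - Real.exp (-f)) atTop (nhds 1) := by
      simpa using tendsto_const_nhds.sub (Real.tendsto_exp_neg_atTop_nhds_zero)
    exact this.congr' heq
  | succ m =>
    have heq : ∀ f : ℝ, 1 - ((m:ℝ)+1) * (Real.exp (-f) * LL m f) = f * Real.exp (-f) * LL (m+1) f := by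
      intro f
      have h := LL_rec m f
      rw [Real.exp_neg]
      have he := Real.exp_pos f
      field_simp
      nlinarith [h]
    have : Tendsto (fun f : ℝ => 1 - ((m:ℝ)+1) * (Real.exp (-f) * LL m f)) atTop (nhds 1) := by
      have := (exp_neg_LL m).const_mul ((m:ℝ)+1)
      simpa using tendsto_const_nhds.sub this
    exact this.congr (fun f => heq f)

lemma B_tendsto (m : ℕ) :
    Tendsto (fun f : ℝ => f * Real.exp (-f) * (f * LL m f - Real.exp f)) atTop (nhds (-(m:ℝ))) := by
  cases m with
  | zero =>
    have heq : ∀ᶠ f : ℝ in atTop, -(f * Real.exp (-f)) = f * Real.exp (-f) * (f * LL 0 f - Real.exp f) := by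
      filter_upwards with f
      rw [LL_zero f]; ring
    have h0 : Tendsto (fun f : ℝ => -(f * Real.exp (-f))) atTop (nhds 0) := by
      have := Real.tendsto_exp_neg_atTop_nhds_zero
      have h1 : Tendsto (fun f : ℝ => f * Real.exp (-f)) atTop (nhds 0) := by
        simpa [Real.exp_neg, div_eq_mul_inv] using Real.tendsto_pow_mul_exp_neg_atTop_nhds_zero 1
      simpa using h1.neg
    simpa using h0.congr' heq
  | succ m =>
    have heq : ∀ f : ℝ, -(((m:ℝ)+1) * (f * Real.exp (-f) * LL m f))
        = f * Real.exp (-f) * (f * LL (m+1) f - Real.exp f) := by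
      intro f
      have h := LL_rec m f
      rw [h]; ring
    have : Tendsto (fun f : ℝ => -(((m:ℝ)+1) * (f * Real.exp (-f) * LL m f))) atTop (nhds (-(((m:ℝ)+1)*1))) :=
      ((D_tendsto m).const_mul ((m:ℝ)+1)).neg
    have h2 := this.congr heq
    simpa using h2



/-- For every fixed `k ≥ 1`, with `c_k(f) = ∫₀¹ s^k e^{sf} ds`, one has
`(c_{k-1}(f) - c_k(f))·f²·e^{-f} → 1` as `f → +∞`; equivalently
`∫₀¹ s^{k-1}(1-s)e^{sf} ds` is asymptotically `e^f/f²`. -/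
theorem statement8 (k : ℕ) (hk : 1 ≤ k) :
    Filter.Tendsto
      (fun f : ℝ =>
        ((∫ s in (0 : ℝ)..1, s ^ (k - 1) * Real.exp (s * f)) -
            ∫ s in (0 : ℝ)..1, s ^ k * Real.exp (s * f)) * f ^ 2 * Real.exp (-f))
      Filter.atTop (nhds 1) ∧
    Filter.Tendsto
      (fun f : ℝ =>
        (∫ s in (0 : ℝ)..1, s ^ (k - 1) * (1 - s) * Real.exp (s * f)) * f ^ 2 * Real.exp (-f))
      Filter.atTop (nhds 1) := by

  obtain ⟨m, rfl⟩ : ∃ m, k = m + 1 := ⟨k - 1, (Nat.succ_pred_eq_of_pos hk).symm⟩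
  have key : Tendsto (fun f : ℝ => (LL m f - LL (m+1) f) * f ^ 2 * Real.exp (-f)) atTop (nhds 1) := by
    have h := (B_tendsto m).add ((D_tendsto m).const_mul ((m:ℝ)+1))
    have hlim : -(m:ℝ) + ((m:ℝ)+1) * 1 = 1 := by ring
    rw [hlim] at h
    apply h.congr
    intro f
    have hr := LL_rec m f
    linear_combination (f * Real.exp (-f)) * hr
  constructor
  · have : ∀ f : ℝ, (LL m f - LL (m+1) f) * f ^ 2 * Real.exp (-f) =
        ((∫ s in (0 : ℝ)..1, s ^ (m + 1 - 1) * Real.exp (s * f)) -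
            ∫ s in (0 : ℝ)..1, s ^ (m+1) * Real.exp (s * f)) * f ^ 2 * Real.exp (-f) := by
      intro f
      simp [LL, Nat.add_sub_cancel]
    exact key.congr this
  · have : ∀ f : ℝ, (LL m f - LL (m+1) f) * f ^ 2 * Real.exp (-f) =
        (∫ s in (0 : ℝ)..1, s ^ (m + 1 - 1) * (1 - s) * Real.exp (s * f)) * f ^ 2 * Real.exp (-f) := by
      intro f
      have hI : (∫ s in (0 : ℝ)..1, s ^ (m + 1 - 1) * (1 - s) * Real.exp (s * f))
          = LL m f - LL (m+1) f := by
        rw [LL, LL, ← intervalIntegral.integral_sub (LL_cont_integrand m f) (LL_cont_integrand (m+1) f)]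
        apply intervalIntegral.integral_congr
        intro s _
        simp only [Nat.add_sub_cancel]
        ring
      rw [hI]
    exact key.congr this
end

section
/- Let (M,g,∇f) be a steady gradient Ricci soliton region on which R_g + |∇f|²_g = c(g) > 0, where R_g → 0 at infinity. Fix β ∈ (0,1) and α ∈ ℝ, and set φ₀ = e^{-βf}. Then Δφ₀ + g(∇(f - α log f), ∇φ₀) = -β( (β + α/f) R_g + (1 - β - α/f) c(g) ) φ₀, and in particular Δ_{f - α log f} φ₀ ≤ -(β(1-β)c(g)/2) φ₀ outside a compact set. -/
open MeasureTheory RealInnerProductSpace Filter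

/-- The Euclidean Laplacian (trace of the Hessian with respect to the flat metric). -/
noncomputable def lapE {d : ℕ} (f : EuclideanSpace ℝ (Fin d) → ℝ)
    (x : EuclideanSpace ℝ (Fin d)) : ℝ :=
  ∑ i : Fin d,
    fderiv ℝ (fun y => fderiv ℝ f y (EuclideanSpace.single i 1)) x (EuclideanSpace.single i 1)

/-! By the chain rule, `Δ(g ∘ f) = g'(f) Δf + g''(f) |∇f|²` and `∇(g ∘ f) = g'(f) ∇f`. For
`g = exp(-β ·)` and `g = id - α log` this gives
`Δ_{f - α log f} e^{-βf} = -β (Δf + (1 - β - α/f) |∇f|²) e^{-βf}`, and the soliton identities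
`Δf = R`, `|∇f|² = c - R` turn it into the stated formula. Since `f → ∞` and `R → 0` at infinity,
the bracket tends to `(1 - β) c > 0`, so it exceeds `(1 - β) c / 2` off a compact set. -/

theorem gradient_comp_of_hasDerivAt {F : Type*} [NormedAddCommGroup F] [InnerProductSpace ℝ F]
    [CompleteSpace F] {g : ℝ → ℝ} {g' : ℝ} {f : F → ℝ} {x : F}
    (hg : HasDerivAt g g' (f x)) (hf : DifferentiableAt ℝ f x) :
    gradient (fun y => g (f y)) x = g' • gradient f x := by
  refine HasGradientAt.gradient ?_
  rw [hasGradientAt_iff_hasFDerivAt, map_smul, toDual_gradient]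
  exact hg.comp_hasFDerivAt x hf.hasFDerivAt

section Euclidean

variable {d : ℕ}

theorem sum_fderiv_single_sq_eq_norm_gradient_sq (f : EuclideanSpace ℝ (Fin d) → ℝ)
    (x : EuclideanSpace ℝ (Fin d)) :
    ∑ i, fderiv ℝ f x (EuclideanSpace.single i 1) ^ 2 = ‖gradient f x‖ ^ 2 := by
  simp [← inner_gradient_left, EuclideanSpace.inner_single_right, EuclideanSpace.real_norm_sq_eq]

theorem lapE_comp {f : EuclideanSpace ℝ (Fin d) → ℝ} {g g' : ℝ → ℝ} {g'' : ℝ}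
    {x : EuclideanSpace ℝ (Fin d)} (hf : ContDiff ℝ 2 f)
    (hg : ∀ t, HasDerivAt g (g' t) t) (hg' : HasDerivAt g' g'' (f x)) :
    lapE (fun y => g (f y)) x = g' (f x) * lapE f x + g'' * ‖gradient f x‖ ^ 2 := by
  have hfd : Differentiable ℝ f := hf.differentiable two_ne_zero
  have hfderiv (v) : Differentiable ℝ (fun y => fderiv ℝ f y v) :=
    ((hf.fderiv_right le_rfl).clm_apply contDiff_const).differentiable one_ne_zero
  have hcomp {h h' : ℝ → ℝ} (y) (hh : HasDerivAt h (h' (f y)) (f y)) :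
      HasFDerivAt (fun z => h (f z)) (h' (f y) • fderiv ℝ f y) y :=
    hh.comp_hasFDerivAt y (hfd y).hasFDerivAt
  have hterm (v) : fderiv ℝ (fun y => fderiv ℝ (fun z => g (f z)) y v) x v
      = g' (f x) * fderiv ℝ (fun y => fderiv ℝ f y v) x v + g'' * fderiv ℝ f x v ^ 2 := by
    have hchain : (fun y => fderiv ℝ (fun z => g (f z)) y v)
        = fun y => g' (f y) * fderiv ℝ f y v :=
      funext fun y => by rw [(hcomp y (hg (f y))).fderiv]; rfl
    rw [hchain, ((hcomp (h' := fun _ => g'') x hg').fun_mul (hfderiv v x).hasFDerivAt).fderiv]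
    simp only [add_apply, smul_apply, smul_eq_mul]
    ring
  simp only [lapE, hterm, Finset.sum_add_distrib, ← Finset.mul_sum,
    sum_fderiv_single_sq_eq_norm_gradient_sq]

end Euclidean

theorem hasDerivAt_exp_const_mul (s t : ℝ) :
    HasDerivAt (fun t => Real.exp (s * t)) (s * Real.exp (s * t)) t := by
  simpa [mul_comm] using ((hasDerivAt_id t).const_mul s).exp

section Barrier

variable {d : ℕ} {f : EuclideanSpace ℝ (Fin d) → ℝ} {x : EuclideanSpace ℝ (Fin d)}

theorem lapE_exp_neg_mul (hf : ContDiff ℝ 2 f) (β : ℝ) :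
    lapE (fun y => Real.exp (-β * f y)) x
      = -β * (lapE f x - β * ‖gradient f x‖ ^ 2) * Real.exp (-β * f x) := by
  rw [lapE_comp hf (hasDerivAt_exp_const_mul (-β))
    ((hasDerivAt_exp_const_mul (-β) (f x)).const_mul (-β))]
  ring

theorem gradient_exp_neg_mul (hf : DifferentiableAt ℝ f x) (β : ℝ) :
    gradient (fun y => Real.exp (-β * f y)) x = (-β * Real.exp (-β * f x)) • gradient f x :=
  gradient_comp_of_hasDerivAt (hasDerivAt_exp_const_mul (-β) (f x)) hf

theorem gradient_sub_mul_log (hf : DifferentiableAt ℝ f x) (hfx : 0 < f x) (α : ℝ) :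
    gradient (fun y => f y - α * Real.log (f y)) x = (1 - α / f x) • gradient f x := by
  have hg : HasDerivAt (fun t => t - α * Real.log t) (1 - α / f x) (f x) := by
    simpa [div_eq_mul_inv] using
      (hasDerivAt_id' _).fun_sub ((Real.hasDerivAt_log hfx.ne').const_mul α)
  exact gradient_comp_of_hasDerivAt hg hf

theorem lapE_add_inner_gradient_exp_neg_mul (hf : ContDiff ℝ 2 f) (hfx : 0 < f x) (α β : ℝ) :
    lapE (fun y => Real.exp (-β * f y)) x +
        ⟪gradient (fun y => f y - α * Real.log (f y)) x,
          gradient (fun y => Real.exp (-β * f y)) x⟫ =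
      -β * (lapE f x + (1 - β - α / f x) * ‖gradient f x‖ ^ 2) * Real.exp (-β * f x) := by
  have hfd := hf.differentiable two_ne_zero x
  rw [lapE_exp_neg_mul hf, gradient_sub_mul_log hfd hfx, gradient_exp_neg_mul hfd,
    real_inner_smul_left, real_inner_smul_right, real_inner_self_eq_norm_sq]
  ring

end Barrier

theorem eventually_le_barrier_coeff {ι : Type*} {l : Filter ι} {f R : ι → ℝ} {c β : ℝ} (α : ℝ)
    (hf : Tendsto f l atTop) (hR : Tendsto R l (nhds 0)) (hβc : 0 < (1 - β) * c) :
    ∀ᶠ x in l, (1 - β) * c / 2 ≤ (β + α / f x) * R x + (1 - β - α / f x) * c := by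
  have hαf : Tendsto (fun x => α / f x) l (nhds 0) := hf.const_div_atTop α
  have hlim : Tendsto (fun x => (β + α / f x) * R x + (1 - β - α / f x) * c) l
      (nhds ((1 - β) * c)) := by
    simpa using ((tendsto_const_nhds.add hαf).mul hR).add
      ((tendsto_const_nhds.sub hαf).mul (tendsto_const_nhds (x := c)))
  exact hlim.eventually (eventually_ge_nhds (half_lt_self hβc))

/-- Barrier computation on a steady gradient Ricci soliton region (formalised in a flat
chart): if `R + |∇f|² = c > 0` with `Δf = R` (the soliton identities), `R → 0` at infinity,
`f` positive and proper, `β ∈ (0,1)`, `α ∈ ℝ`, and `φ₀ = e^{-βf}`, then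
`Δφ₀ + ⟨∇(f - α log f), ∇φ₀⟩ = -β((β + α/f) R + (1 - β - α/f) c) φ₀`, and in particular
`Δ_{f - α log f} φ₀ ≤ -(β(1-β)c/2) φ₀` outside a compact set. -/
theorem statement12 {d : ℕ} (f R : EuclideanSpace ℝ (Fin d) → ℝ)
    (hf : ContDiff ℝ 2 f) (hfpos : ∀ x, 0 < f x)
    (hproper : Tendsto f (cocompact (EuclideanSpace ℝ (Fin d))) atTop)
    (c : ℝ) (hc : 0 < c)
    (hΔf : ∀ x, lapE f x = R x)
    (hcharge : ∀ x, ‖gradient f x‖ ^ 2 = c - R x)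
    (hR0 : Tendsto R (cocompact (EuclideanSpace ℝ (Fin d))) (nhds 0))
    (β α : ℝ) (hβ : β ∈ Set.Ioo (0 : ℝ) 1) :
    (∀ x, lapE (fun y => Real.exp (-β * f y)) x +
        ⟪gradient (fun y => f y - α * Real.log (f y)) x,
          gradient (fun y => Real.exp (-β * f y)) x⟫ =
        -β * ((β + α / f x) * R x + (1 - β - α / f x) * c) * Real.exp (-β * f x)) ∧
    ∃ K : Set (EuclideanSpace ℝ (Fin d)), IsCompact K ∧ ∀ x ∉ K,
      lapE (fun y => Real.exp (-β * f y)) x +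
          ⟪gradient (fun y => f y - α * Real.log (f y)) x,
            gradient (fun y => Real.exp (-β * f y)) x⟫ ≤
        -(β * (1 - β) * c / 2) * Real.exp (-β * f x) := by
  obtain ⟨hβ0, hβ1⟩ := hβ
  have hidentity (x) : lapE (fun y => Real.exp (-β * f y)) x +
      ⟪gradient (fun y => f y - α * Real.log (f y)) x,
        gradient (fun y => Real.exp (-β * f y)) x⟫ =
      -β * ((β + α / f x) * R x + (1 - β - α / f x) * c) * Real.exp (-β * f x) := by
    rw [lapE_add_inner_gradient_exp_neg_mul hf (hfpos x), hΔf, hcharge]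
    ring
  refine ⟨hidentity, ?_⟩
  obtain ⟨K, hK, hKc⟩ := mem_cocompact.mp
    (eventually_le_barrier_coeff α hproper hR0 (mul_pos (sub_pos.mpr hβ1) hc))
  refine ⟨K, hK, fun x hx => ?_⟩
  have hcoeff : β * ((1 - β) * c / 2) * Real.exp (-β * f x)
      ≤ β * ((β + α / f x) * R x + (1 - β - α / f x) * c) * Real.exp (-β * f x) := by
    gcongr
    exact hKc hx
  rw [hidentity x]
  linarith
end
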